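/- If p is a prime such that z_F(p) is even, where z_F(p) is the entry point of p in the Fibonacci sequence, then the Möbius dual of the Lucas number sequence at n = z_F(p), namely M^L_n = ∏_{d|n} L_d^{μ(n/d)}, is a rational number that is not an integer. -/
import Mathlib


open ArithmeticFunction Finset

def lucas : ℕ → ℕ
  | 0 => 2
  | 1 => 1
  | (n + 2) => lucas (n + 1) + lucas n

lemma lucas_add_fib (n : ℕ) : lucas n + Nat.fib n = 2 * Nat.fib (n + 1) := by
  induction n using Nat.twoStepInduction with
  | zero => simp [lucas]
  | one => simp [lucas]
  | more n ih1 ih2 =>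
    rw [lucas, Nat.fib_add_two, Nat.fib_add_two (n := n + 1)]
    omega

lemma fib_two_mul_eq (n : ℕ) : Nat.fib (2 * n) = Nat.fib n * lucas n := by
  have hl : lucas n = 2 * Nat.fib (n + 1) - Nat.fib n := by
    have := lucas_add_fib n; omega
  rw [Nat.fib_two_mul, hl]

lemma fib_cassini (n : ℕ) :
    (Nat.fib (n + 2) : ℤ) * Nat.fib n - (Nat.fib (n + 1) : ℤ) ^ 2 = (-1) ^ (n + 1) := by
  induction n with
  | zero => simp
  | succ n ih =>
    have h2 : (Nat.fib (n + 3) : ℤ) = Nat.fib (n + 1) + Nat.fib (n + 2) := by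
      have := Nat.fib_add_two (n := n + 1); push_cast [this]; ring
    have h1 : (Nat.fib (n + 2) : ℤ) = Nat.fib n + Nat.fib (n + 1) := by
      have := Nat.fib_add_two (n := n); push_cast [this]; ring
    rw [show n + 1 + 2 = n + 3 from rfl, h2]
    have : (-1 : ℤ) ^ (n + 1 + 1) = -(-1) ^ (n + 1) := by ring
    rw [this, ← ih, h1]
    ring

lemma lucas_sq (n : ℕ) :
    (lucas (n + 1) : ℤ) ^ 2 = 5 * (Nat.fib (n + 1) : ℤ) ^ 2 + 4 * (-1) ^ (n + 1) := by
  have hl : (lucas (n + 1) : ℤ) = Nat.fib (n + 2) + Nat.fib n := by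
    have h := lucas_add_fib (n + 1)
    simp only [show n + 1 + 1 = n + 2 from rfl] at h
    have h1 : Nat.fib (n + 2) = Nat.fib n + Nat.fib (n + 1) := Nat.fib_add_two
    have : lucas (n + 1) = Nat.fib (n + 2) + Nat.fib n := by omega
    push_cast [this]; ring
  have hc := fib_cassini n
  have h1 : (Nat.fib (n + 2) : ℤ) = Nat.fib n + Nat.fib (n + 1) := by
    have := Nat.fib_add_two (n := n); push_cast [this]; ring
  rw [h1] at hc
  rw [hl, h1]
  linear_combination 4 * hc

lemma lucas_pos (n : ℕ) : 0 < lucas n := by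
  induction n using Nat.twoStepInduction with
  | zero => simp [lucas]
  | one => simp [lucas]
  | more n ih1 ih2 => rw [lucas]; omega

theorem lucas_moebius_dual_not_int_of_even_entry (p : ℕ) (hp : p.Prime)
    (z : ℕ) (hz : IsLeast {n : ℕ | 1 ≤ n ∧ p ∣ Nat.fib n} z) (hzeven : Even z) :
    ¬ ∃ m : ℤ, ∏ d ∈ z.divisors, ((lucas d : ℚ)) ^ (moebius (z / d)) = (m : ℚ) := by
  rintro ⟨m, hm⟩
  obtain ⟨⟨hz1, hzp⟩, hzmin⟩ := hz
  obtain ⟨k, hk⟩ := hzeven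
  have hzk : z = 2 * k := by omega
  have hk1 : 1 ≤ k := by omega
  have hz2 : 2 ≤ z := by omega
  -- p is odd
  have hpodd : p ≠ 2 := by
    rintro rfl
    have h3 : z ≤ 3 := hzmin ⟨by norm_num, by decide⟩
    have hz2' : z = 2 := by omega
    rw [hz2'] at hzp
    simp [Nat.fib] at hzp
  -- entry point divisibility
  have key : ∀ n, 0 < n → p ∣ Nat.fib n → z ∣ n := by
    intro n hn hpn
    have hgpos : 0 < Nat.gcd z n := Nat.gcd_pos_of_pos_left n (by omega)
    have hg : p ∣ Nat.fib (Nat.gcd z n) := by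
      rw [Nat.fib_gcd]; exact Nat.dvd_gcd hzp hpn
    have hle : z ≤ Nat.gcd z n := hzmin ⟨hgpos, hg⟩
    have hgel : Nat.gcd z n ≤ z := Nat.le_of_dvd (by omega) (Nat.gcd_dvd_left z n)
    have : Nat.gcd z n = z := le_antisymm hgel hle
    exact this ▸ Nat.gcd_dvd_right z n
  -- p does not divide lucas z
  have hpLz : ¬ p ∣ lucas z := by
    intro hdvd
    obtain ⟨j, hj⟩ : ∃ j, z = j + 1 := ⟨z - 1, by omega⟩
    have hsq := lucas_sq j
    rw [← hj] at hsq
    have heven : (-1 : ℤ) ^ z = 1 := by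
      rw [hzk]; rw [pow_mul]; norm_num
    rw [heven, mul_one] at hsq
    have h4 : (p : ℤ) ∣ 4 := by
      have h1 : (p : ℤ) ∣ (lucas z : ℤ) ^ 2 := Dvd.dvd.pow (Int.natCast_dvd_natCast.mpr hdvd) (by norm_num)
      have h2 : (p : ℤ) ∣ 5 * (Nat.fib z : ℤ) ^ 2 :=
        Dvd.dvd.mul_left (Dvd.dvd.pow (Int.natCast_dvd_natCast.mpr hzp) (by norm_num)) 5
      have := dvd_sub h1 h2
      rw [hsq] at this
      simpa using this
    have h4' : p ∣ 4 := by exact_mod_cast h4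
    have h2 : p ∣ 2 := hp.dvd_of_dvd_pow (show p ∣ 2 ^ 2 by norm_num [h4'])
    exact hpodd ((Nat.prime_dvd_prime_iff_eq hp Nat.prime_two).mp h2)
  -- p divides lucas k (k = z/2)
  have hpLk : p ∣ lucas k := by
    have hfz : Nat.fib z = Nat.fib k * lucas k := by rw [hzk, fib_two_mul_eq]
    rcases (Nat.Prime.dvd_mul hp).mp (hfz ▸ hzp) with h | h
    · exfalso
      have := hzmin ⟨hk1, h⟩
      omega
    · exact h
  -- if p ∣ lucas d for d a divisor of z, then d = z or d = k
  have hdz : ∀ d ∈ z.divisors, p ∣ lucas d → d = z ∨ d = k := by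
    intro d hd hpd
    obtain ⟨hdvd, hz0⟩ := Nat.mem_divisors.mp hd
    have hdpos : 0 < d := Nat.pos_of_dvd_of_pos hdvd (by omega)
    have hpfd : p ∣ Nat.fib (2 * d) := by
      rw [fib_two_mul_eq]; exact Dvd.dvd.mul_left hpd _
    have hz2d : z ∣ 2 * d := key (2 * d) (by omega) hpfd
    obtain ⟨j, hj⟩ := hdvd
    obtain ⟨i, hi⟩ := hz2d
    have hji : j * i = 2 := by
      have h2d : 2 * d = d * j * i := by rw [← hj, hi]
      have hd' : d * (j * i) = d * 2 := by
        calc d * (j * i) = d * j * i := (mul_assoc _ _ _).symm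
        _ = 2 * d := h2d.symm
        _ = d * 2 := mul_comm _ _
      exact Nat.eq_of_mul_eq_mul_left hdpos hd'
    have hjpos : 0 < j := by
      rcases Nat.eq_zero_or_pos j with h | h
      · subst h; simp at hji
      · exact h
    have hjle : j ≤ 2 := Nat.le_of_dvd two_pos ⟨i, hji.symm⟩
    interval_cases j
    · left; omega
    · right; omega
  -- Split the product
  set D := z.divisors with hD
  set S := D.filter (fun d => moebius (z / d) = -1) with hS
  set B : ℕ := ∏ d ∈ S, lucas d with hB
  set N : ℕ := ∏ d ∈ D.filter (fun d => ¬ moebius (z / d) = -1),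
      lucas d ^ (moebius (z / d)).toNat with hN
  have hBne : (B : ℚ) ≠ 0 := by
    have : 0 < B := Finset.prod_pos fun d _ => lucas_pos d
    exact_mod_cast this.ne'
  have hsplit : ∏ d ∈ D, ((lucas d : ℚ)) ^ (moebius (z / d)) = (N : ℚ) / (B : ℚ) := by
    rw [← Finset.prod_filter_mul_prod_filter_not D (fun d => moebius (z / d) = -1)]
    have h1 : ∏ d ∈ S, ((lucas d : ℚ)) ^ (moebius (z / d)) = (B : ℚ)⁻¹ := by
      rw [hB]
      push_cast
      rw [← Finset.prod_inv_distrib]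
      refine Finset.prod_congr rfl fun d hd => ?_
      rw [hS] at hd
      rw [(Finset.mem_filter.mp hd).2]
      simp [zpow_neg]
    have h2 : ∏ d ∈ D.filter (fun d => ¬ moebius (z / d) = -1),
        ((lucas d : ℚ)) ^ (moebius (z / d)) = (N : ℚ) := by
      rw [hN]
      push_cast
      refine Finset.prod_congr rfl fun d hd => ?_
      have hmem := (Finset.mem_filter.mp hd).2
      have hnn : 0 ≤ moebius (z / d) := by
        rcases moebius_eq_or (z / d) with h | h | h <;> omega
      rw [← zpow_natCast, Int.toNat_of_nonneg hnn]
    rw [h1, h2]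
    ring
  rw [hsplit] at hm
  have hNQ : (N : ℚ) = (m : ℚ) * (B : ℚ) := by
    rw [div_eq_iff hBne] at hm
    exact hm
  have hNZ : (N : ℤ) = m * (B : ℤ) := by exact_mod_cast hNQ
  -- p divides B
  have hkS : k ∈ S := by
    rw [hS, Finset.mem_filter]
    constructor
    · rw [hD, Nat.mem_divisors]
      exact ⟨⟨2, by omega⟩, by omega⟩
    · have hzdk : z / k = 2 := by
        rw [hzk, Nat.mul_div_cancel 2 (show 0 < k by omega)]
      rw [hzdk, moebius_apply_prime Nat.prime_two]
  have hpB : p ∣ B := dvd_trans hpLk (Finset.dvd_prod_of_mem _ hkS)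
  -- hence p divides N
  have hpN : p ∣ N := by
    have : (p : ℤ) ∣ (N : ℤ) := by
      rw [hNZ]
      exact Dvd.dvd.mul_left (Int.natCast_dvd_natCast.mpr hpB) m
    exact_mod_cast this
  -- derive contradiction
  obtain ⟨d, hdmem, hdvd⟩ := Prime.exists_mem_finset_dvd hp.prime (hN ▸ hpN)
  have hmem := Finset.mem_filter.mp hdmem
  have hpd : p ∣ lucas d := by
    rcases Nat.Prime.dvd_of_dvd_pow hp hdvd with h
    exact h
  rcases hdz d hmem.1 hpd with rfl | rfl
  · exact hpLz hpd
  · apply hmem.2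
    have hzdk : z / d = 2 := by
      rw [hzk, Nat.mul_div_cancel 2 (show 0 < d by omega)]
    rw [hzdk, moebius_apply_prime Nat.prime_two]
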